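/- Let (X,d) be a metric space, L : X → ℝ, and G : X → [0,∞) a Borel strong upper gradient of L. Let η : [0,∞) → X be a gradient-flow curve of L with respect to G with η(0) = μ₀, and suppose there is μ∞ ∈ X with d(η(T), μ∞) → 0 as T → ∞ and L(μ∞) = inf_{x∈X} L(x). Assume the map x ↦ d_G(μ₀, x) is sequentially lower semicontinuous at μ∞. Then: (i) if G is sequentially lower semicontinuous at μ∞, then G(μ∞) = 0; (ii) for every ν ∈ X with L(ν) = inf L and G(ν) = 0 one has d_G(μ₀, μ∞) ≤ d_G(μ₀, ν). In particular, μ∞ minimizes x ↦ d_G(μ₀, x) over the set of minimizers of L at which G vanishes. -/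

import Mathlib

/-!
Along the flow the energy identity gives `∫₀^∞ G(η)² ≤ L(μ₀) − inf L < ∞`, so `G(η t)` is small
at arbitrarily late times; lower semicontinuity of `G` turns this into `G(μ∞) = 0`. Reparametrising
`η|[0,T]` to `[0,1]` shows `d_G(μ₀, η T) ≤ ∫₀^T G(η)² = L(μ₀) − L(η T) ≤ L(μ₀) − inf L`, while the
strong upper gradient property gives `L(μ₀) − L(ν) ≤ d_G(μ₀, ν)` for every `ν`; for a minimiser `ν`
both bounds meet, and lower semicontinuity of `d_G(μ₀, ·)` passes the first one to the limit `μ∞`.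
-/

open MeasureTheory Set Filter
open scoped ENNReal

noncomputable section

/-- `m` is a (nonnegative, integrable) upper speed of the curve `γ` on `[a,b]`:
`dist (γ s) (γ t) ≤ ∫_s^t m` for all `a ≤ s ≤ t ≤ b`. -/
def IsUpperSpeedOn {X : Type*} [MetricSpace X] (γ : ℝ → X) (m : ℝ → ℝ) (a b : ℝ) : Prop :=
  (∀ r ∈ Set.Icc a b, 0 ≤ m r) ∧
  IntervalIntegrable m MeasureTheory.volume a b ∧
  ∀ s t : ℝ, a ≤ s → s ≤ t → t ≤ b → dist (γ s) (γ t) ≤ ∫ r in s..t, m r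

/-- The Finsler cost `d_G(x,y)`: the infimum of `∫_0^1 m(t) G(γ(t)) dt` over continuous
curves `γ : [0,1] → X` joining `x` to `y` with integrable upper speed `m`;
`+∞` if no admissible pair exists. -/
def finslerCost {X : Type*} [MetricSpace X] (G : X → ℝ) (x y : X) : ℝ≥0∞ :=
  sInf { c : ℝ≥0∞ | ∃ γ : ℝ → X, ∃ m : ℝ → ℝ,
    ContinuousOn γ (Set.Icc 0 1) ∧ γ 0 = x ∧ γ 1 = y ∧
    IsUpperSpeedOn γ m 0 1 ∧
    c = ∫⁻ t in Set.Ioc (0:ℝ) 1, ENNReal.ofReal (m t * G (γ t)) }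

/-- The action `E_G^T(x,y)`: the infimum of `∫_0^T ((1/2) m(t)² + (1/2) G(γ(t))²) dt` over
continuous curves `γ : [0,T] → X` joining `x` to `y` with square-integrable upper speed `m`;
`+∞` if no admissible pair exists. -/
def actionCost {X : Type*} [MetricSpace X] (G : X → ℝ) (T : ℝ) (x y : X) : ℝ≥0∞ :=
  sInf { c : ℝ≥0∞ | ∃ γ : ℝ → X, ∃ m : ℝ → ℝ,
    ContinuousOn γ (Set.Icc 0 T) ∧ γ 0 = x ∧ γ T = y ∧
    IsUpperSpeedOn γ m 0 T ∧
    IntervalIntegrable (fun t => (m t) ^ 2) MeasureTheory.volume 0 T ∧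
    c = ∫⁻ t in Set.Ioc (0:ℝ) T,
          ENNReal.ofReal ((1/2) * (m t) ^ 2 + (1/2) * (G (γ t)) ^ 2) }

/-- `G` is a strong upper gradient of `v`: along every continuous curve with integrable
upper speed `m`, `|v(γ t) − v(γ s)| ≤ ∫_s^t G(γ r) m(r) dr` (the right-hand side taken as a
possibly infinite nonnegative integral). -/
def IsStrongUpperGradient {X : Type*} [MetricSpace X] (G v : X → ℝ) : Prop :=
  ∀ (a b : ℝ) (γ : ℝ → X) (m : ℝ → ℝ),
    ContinuousOn γ (Set.Icc a b) → IsUpperSpeedOn γ m a b →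
    ∀ s t : ℝ, a ≤ s → s ≤ t → t ≤ b →
      ENNReal.ofReal |v (γ t) - v (γ s)| ≤
        ∫⁻ r in Set.Ioc s t, ENNReal.ofReal (G (γ r) * m r)

/-- A gradient-flow curve (curve of maximal slope in energy-dissipation form) of `v` with
respect to `G`: `η` is continuous on `[0,∞)`, `G∘η` is square-integrable on compacts and is
an upper speed of `η` on every compact subinterval of `[0,∞)`, and the energy-dissipation
equality `v(η s) − v(η t) = ∫_s^t G(η r)² dr` holds for `0 ≤ s ≤ t`. -/
def IsGradientFlowCurve {X : Type*} [MetricSpace X] (v G : X → ℝ) (η : ℝ → X) : Prop :=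
  ContinuousOn η (Set.Ici 0) ∧
  (∀ b : ℝ, 0 ≤ b → IntervalIntegrable (fun t => (G (η t)) ^ 2) MeasureTheory.volume 0 b) ∧
  (∀ a b : ℝ, 0 ≤ a → a ≤ b → IsUpperSpeedOn η (fun t => G (η t)) a b) ∧
  ∀ s t : ℝ, 0 ≤ s → s ≤ t → v (η s) - v (η t) = ∫ r in s..t, (G (η r)) ^ 2

open Topology

section

variable {X : Type*} [MetricSpace X]

lemma ofReal_sub_le_finslerCost {G L : X → ℝ} (hSUG : IsStrongUpperGradient G L) (x y : X) :
    ENNReal.ofReal (L x - L y) ≤ finslerCost G x y := by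
  refine le_sInf ?_
  rintro c ⟨γ, m, hcont, rfl, rfl, hus, rfl⟩
  calc ENNReal.ofReal (L (γ 0) - L (γ 1))
      ≤ ENNReal.ofReal |L (γ 1) - L (γ 0)| :=
        ENNReal.ofReal_le_ofReal ((le_abs_self _).trans_eq (abs_sub_comm _ _))
    _ ≤ ∫⁻ r in Ioc 0 1, ENNReal.ofReal (G (γ r) * m r) :=
        hSUG 0 1 γ m hcont hus 0 1 le_rfl zero_le_one le_rfl
    _ = ∫⁻ r in Ioc 0 1, ENNReal.ofReal (m r * G (γ r)) := by simp only [mul_comm]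

lemma finslerCost_le_lintegral (G : X → ℝ) {γ : ℝ → X} {m : ℝ → ℝ}
    (hcont : ContinuousOn γ (Icc 0 1)) (hus : IsUpperSpeedOn γ m 0 1) :
    finslerCost G (γ 0) (γ 1) ≤ ∫⁻ t in Ioc 0 1, ENNReal.ofReal (m t * G (γ t)) :=
  sInf_le ⟨γ, m, hcont, rfl, rfl, hus, rfl⟩

lemma IsUpperSpeedOn.comp_mul_left {γ : ℝ → X} {m : ℝ → ℝ} {T : ℝ}
    (hus : IsUpperSpeedOn γ m 0 T) (hT : 0 < T) :
    IsUpperSpeedOn (fun t => γ (T * t)) (fun t => T * m (T * t)) 0 1 := by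
  obtain ⟨hm0, hmint, hdist⟩ := hus
  refine ⟨fun r hr => mul_nonneg hT.le (hm0 _ ⟨mul_nonneg hT.le hr.1, ?_⟩), ?_, ?_⟩
  · nlinarith [hr.2]
  · simpa [hT.ne'] using (hmint.comp_mul_left (c := T)).const_mul T
  · intro s t hs hst ht
    rw [intervalIntegral.integral_const_mul, ← smul_eq_mul,
      intervalIntegral.smul_integral_comp_mul_left (fun r => m r) T]
    exact hdist _ _ (mul_nonneg hT.le hs) (by nlinarith) (by nlinarith)

/-- Reparametrising a curve on `[0,T]` to `[0,1]` does not change its Finsler length. -/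
lemma finslerCost_le_integral {G : X → ℝ} (hG0 : ∀ x, 0 ≤ G x) {γ : ℝ → X} {m : ℝ → ℝ} {T : ℝ}
    (hT : 0 < T) (hcont : ContinuousOn γ (Icc 0 T)) (hus : IsUpperSpeedOn γ m 0 T)
    (hint : IntervalIntegrable (fun t => m t * G (γ t)) volume 0 T) :
    finslerCost G (γ 0) (γ T) ≤ ENNReal.ofReal (∫ t in 0..T, m t * G (γ t)) := by
  have hcont' : ContinuousOn (fun t => γ (T * t)) (Icc 0 1) :=
    hcont.comp (continuous_const_mul T).continuousOn fun t ht =>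
      ⟨mul_nonneg hT.le ht.1, by nlinarith [ht.2]⟩
  have hint' : IntervalIntegrable (fun t => T * m (T * t) * G (γ (T * t))) volume 0 1 := by
    simpa [hT.ne', mul_assoc] using (hint.comp_mul_left (c := T)).const_mul T
  have hnonneg : ∀ t ∈ Ioc (0 : ℝ) 1, 0 ≤ T * m (T * t) * G (γ (T * t)) := fun t ht =>
    mul_nonneg ((hus.comp_mul_left hT).1 t (Ioc_subset_Icc_self ht)) (hG0 _)
  have h := finslerCost_le_lintegral G hcont' (hus.comp_mul_left hT)
  simp only [mul_zero, mul_one] at h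
  refine h.trans_eq ?_
  rw [← ofReal_integral_eq_lintegral_ofReal hint'.1 ((ae_restrict_iff' measurableSet_Ioc).2
      (Eventually.of_forall hnonneg)), ← intervalIntegral.integral_of_le zero_le_one]
  congr 1
  simp only [mul_assoc]
  rw [intervalIntegral.integral_const_mul, ← smul_eq_mul,
    intervalIntegral.smul_integral_comp_mul_left (fun r => m r * G (γ r)) T, mul_zero, mul_one]

lemma exists_ge_lt_of_integral_sq_le {f : ℝ → ℝ} {C : ℝ}
    (hint : ∀ b, 0 ≤ b → IntervalIntegrable (fun t => f t ^ 2) volume 0 b)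
    (hbd : ∀ b, 0 ≤ b → ∫ t in 0..b, f t ^ 2 ≤ C) {a ε : ℝ} (ha : 0 ≤ a) (hε : 0 < ε) :
    ∃ t ≥ a, f t < ε := by
  by_contra! hf
  -- on `[a, b]` the integrand is at least `ε²`, which already contributes `|C| + 1 > C`
  set b := a + (|C| + 1) / ε ^ 2
  have hab : a ≤ b := le_add_of_nonneg_right (by positivity)
  have hb : 0 ≤ b := ha.trans hab
  have hint0a : IntervalIntegrable (fun t => f t ^ 2) volume 0 a :=
    (hint b hb).mono_set (by simp [uIcc_of_le ha, uIcc_of_le hb, Icc_subset_Icc le_rfl hab])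
  have hintab : IntervalIntegrable (fun t => f t ^ 2) volume a b :=
    (hint b hb).mono_set (by simp [uIcc_of_le hab, uIcc_of_le hb, Icc_subset_Icc ha])
  have hlow : ∫ _ in a..b, ε ^ 2 ≤ ∫ t in a..b, f t ^ 2 :=
    intervalIntegral.integral_mono_on hab intervalIntegrable_const hintab
      fun t ht => pow_le_pow_left₀ hε.le (hf t ht.1) 2
  have hsplit := intervalIntegral.integral_add_adjacent_intervals hint0a hintab
  have h0a : 0 ≤ ∫ t in 0..a, f t ^ 2 := intervalIntegral.integral_nonneg ha fun _ _ => sq_nonneg _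
  have hval : ∫ _ in a..b, ε ^ 2 = |C| + 1 := by
    simp only [intervalIntegral.integral_const, smul_eq_mul, b, add_sub_cancel_left]
    field_simp
  linarith [hbd b hb, le_abs_self C]

namespace IsGradientFlowCurve

variable {L G : X → ℝ} {η : ℝ → X}

lemma integral_sq_le (hη : IsGradientFlowCurve L G η) {c : ℝ} (hc : ∀ x, c ≤ L x)
    {b : ℝ} (hb : 0 ≤ b) : ∫ r in 0..b, G (η r) ^ 2 ≤ L (η 0) - c := by
  rw [← hη.2.2.2 0 b le_rfl hb]
  linarith [hc (η b)]

lemma exists_seq_tendsto_atTop_slope_tendsto_zero (hη : IsGradientFlowCurve L G η)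
    (hG0 : ∀ x, 0 ≤ G x) {c : ℝ} (hc : ∀ x, c ≤ L x) :
    ∃ t : ℕ → ℝ, Tendsto t atTop atTop ∧ Tendsto (fun n => G (η (t n))) atTop (𝓝 0) := by
  choose t ht_ge ht_lt using fun n : ℕ =>
    exists_ge_lt_of_integral_sq_le hη.2.1 (fun b hb => hη.integral_sq_le hc hb) n.cast_nonneg
      (Nat.one_div_pos_of_nat (α := ℝ) (n := n))
  exact ⟨t, tendsto_atTop_mono ht_ge tendsto_natCast_atTop_atTop,
    squeeze_zero (fun n => hG0 _) (fun n => (ht_lt n).le) tendsto_one_div_add_atTop_nhds_zero_nat⟩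

lemma finslerCost_le_sub (hη : IsGradientFlowCurve L G η) (hG0 : ∀ x, 0 ≤ G x) {T : ℝ}
    (hT : 0 < T) : finslerCost G (η 0) (η T) ≤ ENNReal.ofReal (L (η 0) - L (η T)) := by
  have hsq : ∀ t, G (η t) * G (η t) = G (η t) ^ 2 := fun t => (sq _).symm
  have h := finslerCost_le_integral hG0 hT (hη.1.mono Icc_subset_Ici_self)
    (hη.2.2.1 0 T le_rfl hT.le) (by simpa only [hsq] using hη.2.1 T hT.le)
  simpa only [hsq, hη.2.2.2 0 T le_rfl hT.le] using h

end IsGradientFlowCurve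

end

theorem nonvanishing_selection {X : Type*} [MetricSpace X]
    (L G : X → ℝ) (hG0 : ∀ x, 0 ≤ G x)
    (hSUG : IsStrongUpperGradient G L)
    (μ₀ : X) (η : ℝ → X) (hη : IsGradientFlowCurve L G η) (hη0 : η 0 = μ₀)
    (μinf : X) (hconv : Filter.Tendsto η Filter.atTop (nhds μinf))
    (hmin : ∀ x : X, L μinf ≤ L x)
    (hdGlsc : ∀ u : ℕ → X, Filter.Tendsto u Filter.atTop (nhds μinf) →
      finslerCost G μ₀ μinf ≤ Filter.liminf (fun n => finslerCost G μ₀ (u n)) Filter.atTop) :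
    ((∀ u : ℕ → X, Filter.Tendsto u Filter.atTop (nhds μinf) →
        G μinf ≤ Filter.liminf (fun n => G (u n)) Filter.atTop) → G μinf = 0) ∧
    (∀ ν : X, (∀ x : X, L ν ≤ L x) → G ν = 0 →
      finslerCost G μ₀ μinf ≤ finslerCost G μ₀ ν) := by
  subst hη0
  constructor
  · intro hGlsc
    obtain ⟨t, ht, hGt⟩ := hη.exists_seq_tendsto_atTop_slope_tendsto_zero hG0 hmin
    have h := hGlsc (fun n => η (t n)) (hconv.comp ht)
    rw [hGt.liminf_eq] at h
    exact le_antisymm h (hG0 μinf)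
  · intro ν hν _
    have hbound : ∀ n : ℕ, finslerCost G (η 0) (η (n + 1)) ≤ ENNReal.ofReal (L (η 0) - L ν) :=
      fun n => (hη.finslerCost_le_sub hG0 (by positivity)).trans
        (ENNReal.ofReal_le_ofReal (by linarith [hν μinf, hmin (η (n + 1))]))
    calc finslerCost G (η 0) μinf
        ≤ liminf (fun n : ℕ => finslerCost G (η 0) (η (n + 1))) atTop :=
          hdGlsc _ (hconv.comp (tendsto_natCast_atTop_atTop.atTop_add tendsto_const_nhds))
      _ ≤ ENNReal.ofReal (L (η 0) - L ν) := liminf_le_of_frequently_le' (Frequently.of_forall hbound)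
      _ ≤ finslerCost G (η 0) ν := ofReal_sub_le_finslerCost hSUG _ _
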